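/- If the pair (A, B) is controllable (the controllability matrix [B, AB, ..., A^{n-1}B] has full row rank n), then for the block cyclic matrices Ǎ, B̌ built from constant blocks A and B, the pair (Ǎ, B̌) is controllable (its controllability matrix has full row rank Nn). -/

import Mathlib

open Matrix

/-- Controllability matrix `[P, MP, …, M^{k-1}P]` of a pair `(M, P)` with `M` of
size `k×k` (`k = Fintype.card`), as a matrix with column index `Fin k × cols`. -/
noncomputable def ctrbMat {k m : Type*} [Fintype k] [DecidableEq k] [Fintype m]
    (M : Matrix k k ℝ) (P : Matrix k m ℝ) :
    Matrix k (Fin (Fintype.card k) × m) ℝ :=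
  fun r c => (M ^ (c.1 : ℕ) * P) r c.2

/-- Block cyclic matrix with every nonzero block `(i+1 mod N, i)` equal to `A`. -/
def blockCyclicConst {N a b : ℕ} [NeZero N] (A : Matrix (Fin a) (Fin b) ℝ) :
    Matrix (Fin N × Fin a) (Fin N × Fin b) ℝ :=
  fun p r => if p.1 = r.1 + 1 then A p.2 r.2 else 0

lemma rank_eq_card_of_transpose_inj {ι κ : Type*} [Fintype ι] [Fintype κ]
    (M : Matrix ι κ ℝ) (h : Function.Injective Mᵀ.mulVecLin) :
    M.rank = Fintype.card ι := by
  rw [← Matrix.rank_transpose, Matrix.rank,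
    LinearMap.finrank_range_of_inj h, Module.finrank_fintype_fun_eq_card]

lemma transpose_inj_of_rank_eq_card {ι κ : Type*} [Fintype ι] [Fintype κ]
    (M : Matrix ι κ ℝ) (h : M.rank = Fintype.card ι) :
    Function.Injective Mᵀ.mulVecLin := by
  rw [← LinearMap.ker_eq_bot]
  have h1 := LinearMap.finrank_range_add_finrank_ker Mᵀ.mulVecLin
  rw [Module.finrank_fintype_fun_eq_card] at h1
  have h2 : (Mᵀ).rank = Fintype.card ι := by rw [Matrix.rank_transpose, h]
  rw [Matrix.rank] at h2
  rw [h2] at h1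
  have : Module.finrank ℝ (LinearMap.ker Mᵀ.mulVecLin) = 0 := by omega
  exact Submodule.finrank_eq_zero.mp this

open Fin.CommRing in
lemma blockCyclic_pow {N n : ℕ} [NeZero N] (A : Matrix (Fin n) (Fin n) ℝ) (j : ℕ) :
    (blockCyclicConst (N := N) A) ^ j =
      fun p r => if p.1 = r.1 + (j : Fin N) then (A ^ j) p.2 r.2 else 0 := by
  induction j with
  | zero =>
    funext p r
    simp only [pow_zero, Matrix.one_apply, Prod.ext_iff, Nat.cast_zero, add_zero]
    by_cases h1 : p.1 = r.1 <;> by_cases h2 : p.2 = r.2 <;> simp [h1, h2]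
  | succ j ih =>
    funext p r
    rw [pow_succ, Matrix.mul_apply]
    simp only [Matrix.mul_apply, ih, blockCyclicConst, Fintype.sum_prod_type]
    simp only [ite_mul, mul_ite, zero_mul, mul_zero]
    rw [Finset.sum_eq_single (r.1 + 1) (by intro b _ hb; simp [hb]) (by simp)]
    simp only [if_pos rfl]
    have hc : r.1 + ((j : ℕ) + 1 : ℕ) = r.1 + 1 + (j : Fin N) := by push_cast; ring
    rw [hc]
    by_cases h : p.1 = r.1 + 1 + (j : Fin N)
    · rw [if_pos h, pow_succ, Matrix.mul_apply]
      exact Finset.sum_congr rfl fun x _ => by simp [h]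
    · rw [if_neg h]
      simp [h]

open Fin.CommRing in
lemma blockCyclic_pow_mul {N n m : ℕ} [NeZero N] (A : Matrix (Fin n) (Fin n) ℝ)
    (B : Matrix (Fin n) (Fin m) ℝ) (j : ℕ) (p : Fin N × Fin n) (r : Fin N × Fin m) :
    ((blockCyclicConst (N := N) A) ^ j * blockCyclicConst (N := N) B) p r =
      if p.1 = r.1 + 1 + (j : Fin N) then (A ^ j * B) p.2 r.2 else 0 := by
  rw [Matrix.mul_apply, blockCyclic_pow]
  simp only [Matrix.mul_apply, blockCyclicConst, Fintype.sum_prod_type]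
  simp only [ite_mul, mul_ite, zero_mul, mul_zero]
  rw [Finset.sum_eq_single (r.1 + 1) (by intro b _ hb; simp [hb]) (by simp)]
  simp only [if_pos rfl]
  by_cases h : p.1 = r.1 + 1 + (j : Fin N)
  · simp [h, Matrix.mul_apply]
  · rw [if_neg h]
    simp [h]

/-- If `(A, B)` is controllable, then the cycled pair `(Ǎ, B̌)` is controllable. -/
theorem blockCyclic_controllable {N n m : ℕ} [NeZero N]
    (A : Matrix (Fin n) (Fin n) ℝ) (B : Matrix (Fin n) (Fin m) ℝ)
    (hctrb : (ctrbMat A B).rank = n) :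
    (ctrbMat (blockCyclicConst (N := N) A) (blockCyclicConst (N := N) B)).rank
      = N * n := by
  have hcard : Fintype.card (Fin N × Fin n) = N * n := by simp
  have hNn : n ≤ N * n := Nat.le_mul_of_pos_left n (Nat.pos_of_ne_zero (NeZero.ne N))
  -- injectivity of the transpose of the small controllability matrix
  have hsmall : Function.Injective (ctrbMat A B)ᵀ.mulVecLin :=
    transpose_inj_of_rank_eq_card _ (by simpa using hctrb)
  open Fin.CommRing in
  have hbig : Function.Injective
      (ctrbMat (blockCyclicConst (N := N) A) (blockCyclicConst (N := N) B))ᵀ.mulVecLin := by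
    rw [injective_iff_map_eq_zero]
    intro v hv
    have hv' : ∀ (j : Fin (Fintype.card (Fin N × Fin n))) (q : Fin N) (c : Fin m),
        (∑ x : Fin N × Fin n,
          (if x.1 = q + 1 + ((j : ℕ) : Fin N) then (A ^ (j : ℕ) * B) x.2 c * v x else 0)) = 0 := by
      intro j q c
      have h := congrFun hv (j, (q, c))
      simp only [Matrix.mulVecLin_apply, Pi.zero_apply, Matrix.mulVec, dotProduct,
        Matrix.transpose_apply, ctrbMat, blockCyclic_pow_mul, ite_mul, zero_mul] at h
      exact h
    funext x
    obtain ⟨p₀, r₀⟩ := x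
    have hw : (ctrbMat A B)ᵀ.mulVecLin (fun r => v (p₀, r)) = 0 := by
      funext jc
      obtain ⟨j, c⟩ := jc
      have hjlt : (j : ℕ) < Fintype.card (Fin N × Fin n) := by
        have := j.2
        simp only [Fintype.card_fin] at this
        simp only [Fintype.card_prod, Fintype.card_fin]
        omega
      have h1 := hv' ⟨(j : ℕ), hjlt⟩ (p₀ - 1 - ((j : ℕ) : Fin N)) c
      have hq : p₀ - 1 - ((j : ℕ) : Fin N) + 1 + ((j : ℕ) : Fin N) = p₀ := by ring
      rw [show ((⟨(j : ℕ), hjlt⟩ : Fin (Fintype.card (Fin N × Fin n))) : ℕ) = (j : ℕ) from rfl,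
        hq, Fintype.sum_prod_type] at h1
      simp only [Matrix.mulVecLin_apply, Matrix.mulVec, dotProduct,
        Matrix.transpose_apply, ctrbMat, Pi.zero_apply]
      calc ∑ r, (A ^ (j : ℕ) * B) r c * v (p₀, r)
          = ∑ p : Fin N, ∑ r : Fin n,
              (if p = p₀ then (A ^ (j : ℕ) * B) r c * v (p, r) else 0) := by
            rw [Finset.sum_eq_single p₀ (by intro b _ hb; simp [hb]) (by simp)]
            simp
        _ = 0 := h1
    have h0 : (fun r => v (p₀, r)) = 0 := hsmall (by rw [hw, map_zero])
    exact congrFun h0 r₀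
  rw [rank_eq_card_of_transpose_inj _ hbig, hcard]
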